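/- arXiv:2008.13203 — 2 statements merged into one kernel-verified Lean document; each statement's English description precedes it below -/
import Mathlib

section
/- Let T be a singular subset of an association scheme S, let U_T = {0 ≤ i ≤ d : R_i ∈ T}, and set v_T = Σ_{i ∈ U_T} A̅_i ∈ 𝔽S. If p divides k_i for every relation R_i ∈ S outside the thin radical O_ϑ(S), then ⟨v_T⟩_𝔽 is a trivial 𝔽S-submodule of the regular 𝔽S-module, i.e. A̅_a v_T = k̅_a v_T for every 0 ≤ a ≤ d. -/
open scoped Classical

/-- An association scheme of class `d` on a nonempty finite set `X`:
a partition of `X × X` into nonempty relations `r 0, …, r d` with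
`r 0` the diagonal, closed under converse (`star`), and with
intersection numbers `pNum i j k`. -/
structure AssocScheme (X : Type*) [Fintype X] [Nonempty X] (d : ℕ) where
  r : Fin (d + 1) → Set (X × X)
  r_nonempty : ∀ i, (r i).Nonempty
  existsUnique_rel : ∀ q : X × X, ∃! i, q ∈ r i
  r_zero : r 0 = {q : X × X | q.1 = q.2}
  star : Fin (d + 1) → Fin (d + 1)
  mem_star : ∀ (i : Fin (d + 1)) (q : X × X), q ∈ r (star i) ↔ (q.2, q.1) ∈ r i
  pNum : Fin (d + 1) → Fin (d + 1) → Fin (d + 1) → ℕ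
  ncard_eq : ∀ (i j k : Fin (d + 1)), ∀ q ∈ r k,
    {z : X | (q.1, z) ∈ r i ∧ (z, q.2) ∈ r j}.ncard = pNum i j k

namespace AssocScheme

variable {X : Type*} [Fintype X] [Nonempty X] {d : ℕ}

/-- The valency `k_i = p_{i i*}^0` of the relation `R_i`. -/
def val (S : AssocScheme X d) (i : Fin (d + 1)) : ℕ := S.pNum i (S.star i) 0

/-- The complex product `UV = {R_k : p_{uv}^k > 0 for some R_u ∈ U, R_v ∈ V}`. -/
def cmul (S : AssocScheme X d) (U V : Set (Fin (d + 1))) : Set (Fin (d + 1)) :=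
  {k | ∃ u ∈ U, ∃ v ∈ V, 0 < S.pNum u v k}

/-- A nonempty subset `T` is closed if `T*T ⊆ T`. -/
def IsClosedSubset (S : AssocScheme X d) (T : Set (Fin (d + 1))) : Prop :=
  T.Nonempty ∧ S.cmul (S.star '' T) T ⊆ T

/-- The thin radical `O_ϑ(S) = {R_i : k_i = 1}`. -/
def thinRadical (S : AssocScheme X d) : Set (Fin (d + 1)) := {i | S.val i = 1}

/-- A closed subset `T` is strongly normal if `R_{i*} T R_i ⊆ T` for all `i`. -/
def IsStronglyNormal (S : AssocScheme X d) (T : Set (Fin (d + 1))) : Prop :=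
  S.IsClosedSubset T ∧ ∀ i : Fin (d + 1), S.cmul (S.cmul {S.star i} T) {i} ⊆ T

/-- The thin residue `O^ϑ(S)`: the intersection of all strongly normal closed subsets. -/
def thinResidue (S : AssocScheme X d) : Set (Fin (d + 1)) :=
  ⋂₀ {T | S.IsStronglyNormal T}

/-- `⟨H⟩`: the intersection of all closed subsets containing `H`. -/
def closure (S : AssocScheme X d) (H : Set (Fin (d + 1))) : Set (Fin (d + 1)) :=
  ⋂₀ {T | S.IsClosedSubset T ∧ H ⊆ T}

/-- The adjacency matrix `A̅_i` of `R_i`, with entries in `𝔽`. -/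
noncomputable def adj (S : AssocScheme X d) (𝔽 : Type*) [Field 𝔽] (i : Fin (d + 1)) :
    Matrix X X 𝔽 :=
  Matrix.of fun x y => if (x, y) ∈ S.r i then 1 else 0

/-- `v` spans a trivial `𝔽S`-submodule of the regular `𝔽S`-module:
`v` is a nonzero element of `𝔽S` with `A̅_i v = k̅_i v` for all `i`. -/
def IsTrivialVector (S : AssocScheme X d) (𝔽 : Type*) [Field 𝔽] (v : Matrix X X 𝔽) : Prop :=
  v ≠ 0 ∧ v ∈ Submodule.span 𝔽 (Set.range (S.adj 𝔽)) ∧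
    ∀ i : Fin (d + 1), S.adj 𝔽 i * v = (S.val i : 𝔽) • v

/-- `S` is `p`-transitive over `𝔽` (of characteristic `p`) if the regular `𝔽S`-module
contains a unique trivial `𝔽S`-submodule. -/
def IsPTransitive (S : AssocScheme X d) (𝔽 : Type*) [Field 𝔽] : Prop :=
  ∃! W : Submodule 𝔽 (Matrix X X 𝔽),
    ∃ v : Matrix X X 𝔽, S.IsTrivialVector 𝔽 v ∧ W = Submodule.span 𝔽 {v}

/-- A subset `T ⊆ S` is singular if `O_ϑ(S) ⊆ T` and
`R_x R_{y*} R_y R_z ⊆ T` for all `R_x ∈ O_ϑ(S)`, `R_y ∈ S`, `R_z ∈ T`. -/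
def IsSingular (S : AssocScheme X d) (T : Set (Fin (d + 1))) : Prop :=
  S.thinRadical ⊆ T ∧ ∀ x ∈ S.thinRadical, ∀ y : Fin (d + 1), ∀ z ∈ T,
    S.cmul (S.cmul (S.cmul {x} {S.star y}) {y}) {z} ⊆ T

/-- `S_{p'} = {R_i ∈ S : p ∤ k_i}`. -/
def pPrimePart (S : AssocScheme X d) (p : ℕ) : Set (Fin (d + 1)) :=
  {i | ¬ p ∣ S.val i}

end AssocScheme

namespace AssocScheme

variable {X : Type*} [Fintype X] [Nonempty X] {d : ℕ} (S : AssocScheme X d)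

/-- The unique relation containing a given pair. -/
noncomputable def relOf (q : X × X) : Fin (d + 1) :=
  (S.existsUnique_rel q).exists.choose

lemma mem_relOf (q : X × X) : q ∈ S.r (S.relOf q) :=
  (S.existsUnique_rel q).exists.choose_spec

lemma rel_eq {q : X × X} {i j : Fin (d + 1)} (hi : q ∈ S.r i) (hj : q ∈ S.r j) : i = j := by
  obtain ⟨k, -, hk⟩ := S.existsUnique_rel q
  rw [hk i hi, hk j hj]

lemma relOf_eq {q : X × X} {i : Fin (d + 1)} (hi : q ∈ S.r i) : S.relOf q = i :=
  S.rel_eq (S.mem_relOf q) hi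

lemma star_zero : S.star 0 = 0 := by
  obtain ⟨q, hq⟩ := S.r_nonempty (S.star (0 : Fin (d + 1)))
  have h2 := (S.mem_star 0 q).1 hq
  rw [S.r_zero] at h2
  have hq0 : q ∈ S.r 0 := by rw [S.r_zero]; exact h2.symm
  exact S.rel_eq hq hq0

lemma pNum_pos {i j k : Fin (d + 1)} {x w y : X} (hxw : (x, w) ∈ S.r i)
    (hwy : (w, y) ∈ S.r j) (hxy : (x, y) ∈ S.r k) : 0 < S.pNum i j k := by
  have h := S.ncard_eq i j k (x, y) hxy
  rw [← h, Set.ncard_pos (Set.toFinite _)]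
  exact ⟨w, hxw, hwy⟩

lemma pNum_zero_left (a : Fin (d + 1)) : 0 < S.pNum 0 a a := by
  obtain ⟨q, hq⟩ := S.r_nonempty a
  have h0 : ((q.1 : X), q.1) ∈ S.r 0 := by rw [S.r_zero]; rfl
  exact S.pNum_pos h0 hq hq

lemma pNum_zero_right (a : Fin (d + 1)) : 0 < S.pNum a 0 a := by
  obtain ⟨q, hq⟩ := S.r_nonempty a
  have h0 : ((q.2 : X), q.2) ∈ S.r 0 := by rw [S.r_zero]; rfl
  exact S.pNum_pos hq h0 hq

lemma card_filter_r (a : Fin (d + 1)) (x : X) :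
    (Finset.univ.filter fun z => (x, z) ∈ S.r a).card = S.val a := by
  have hx : ((x : X), x) ∈ S.r 0 := by rw [S.r_zero]; rfl
  have h := S.ncard_eq a (S.star a) 0 (x, x) hx
  have hset : {z : X | (x, z) ∈ S.r a ∧ (z, x) ∈ S.r (S.star a)} = {z : X | (x, z) ∈ S.r a} := by
    ext z
    simp only [Set.mem_setOf_eq, and_iff_left_iff_imp]
    intro hz
    exact (S.mem_star a (z, x)).2 hz
  rw [hset] at h
  show _ = S.pNum a (S.star a) 0
  rw [← h, ← Set.ncard_coe_finset]
  congr 1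
  ext z
  simp

lemma val_zero : S.val 0 = 1 := by
  obtain ⟨x⟩ := ‹Nonempty X›
  have h := S.card_filter_r 0 x
  have hs : (Finset.univ.filter fun z => (x, z) ∈ S.r (0 : Fin (d + 1))) = {x} := by
    ext z
    simp [S.r_zero, eq_comm]
  rw [hs] at h
  simpa using h.symm

lemma card_rel (a : Fin (d + 1)) :
    (Finset.univ.filter fun q : X × X => q ∈ S.r a).card = Fintype.card X * S.val a := by
  rw [Finset.card_eq_sum_card_fiberwise (f := fun q : X × X => q.1) (t := Finset.univ)
    (fun q _ => Finset.mem_univ _)]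
  have hfib : ∀ x : X, ((Finset.univ.filter fun q : X × X => q ∈ S.r a).filter
      fun q => q.1 = x).card = S.val a := by
    intro x
    rw [← S.card_filter_r a x]
    apply Finset.card_bij (fun q _ => q.2)
    · intro q hq
      simp only [Finset.mem_filter, Finset.mem_univ, true_and] at hq ⊢
      obtain ⟨hqa, hq1⟩ := hq
      rw [← hq1]
      exact hqa
    · intro q hq q' hq' heq
      simp only [Finset.mem_filter] at hq hq'
      exact Prod.ext (hq.2.trans hq'.2.symm) heq
    · intro z hz
      simp only [Finset.mem_filter, Finset.mem_univ, true_and] at hz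
      exact ⟨(x, z), by simp [hz], rfl⟩
  calc ∑ x : X, ((Finset.univ.filter fun q : X × X => q ∈ S.r a).filter
      fun q => q.1 = x).card = ∑ _x : X, S.val a := Finset.sum_congr rfl fun x _ => hfib x
    _ = Fintype.card X * S.val a := by rw [Finset.sum_const, smul_eq_mul, Finset.card_univ]

lemma val_star (a : Fin (d + 1)) : S.val (S.star a) = S.val a := by
  have key : (Finset.univ.filter fun q : X × X => q ∈ S.r (S.star a)).card
      = (Finset.univ.filter fun q : X × X => q ∈ S.r a).card := by
    apply Finset.card_bij (fun q _ => q.swap)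
    · intro q hq
      simp only [Finset.mem_filter, Finset.mem_univ, true_and] at hq ⊢
      exact (S.mem_star a q).1 hq
    · intro q _ q' _ h
      exact Prod.swap_injective h
    · intro q hq
      simp only [Finset.mem_filter, Finset.mem_univ, true_and] at hq
      refine ⟨q.swap, ?_, Prod.swap_swap q⟩
      simp only [Finset.mem_filter, Finset.mem_univ, true_and]
      exact (S.mem_star a q.swap).2 hq
  rw [S.card_rel, S.card_rel] at key
  exact Nat.eq_of_mul_eq_mul_left Fintype.card_pos key

lemma zero_mem_thinRadical : (0 : Fin (d + 1)) ∈ S.thinRadical := S.val_zero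

lemma singular_step1 {T : Set (Fin (d + 1))} (hT : S.IsSingular T) (a : Fin (d + 1))
    {z m hm : Fin (d + 1)} (hz : z ∈ T) (h1 : 0 < S.pNum (S.star a) a hm)
    (h2 : 0 < S.pNum hm z m) : m ∈ T :=
  hT.2 0 S.zero_mem_thinRadical a z hz
    ⟨hm, ⟨S.star a, ⟨0, rfl, S.star a, rfl, S.pNum_zero_left (S.star a)⟩, a, rfl, h1⟩,
      z, rfl, h2⟩

lemma singular_step2 {T : Set (Fin (d + 1))} (hT : S.IsSingular T) {a z m : Fin (d + 1)}
    (ha : a ∈ S.thinRadical) (hz : z ∈ T) (h2 : 0 < S.pNum a z m) : m ∈ T := by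
  refine hT.2 a ha 0 z hz ⟨a, ⟨a, ⟨a, rfl, S.star 0, rfl, ?_⟩, 0, rfl, S.pNum_zero_right a⟩,
    z, rfl, h2⟩
  rw [S.star_zero]
  exact S.pNum_zero_right a

lemma transfer {T : Set (Fin (d + 1))} (hT : S.IsSingular T) {a : Fin (d + 1)} {x w w' y : X}
    (hw : (x, w) ∈ S.r a) (hw' : (x, w') ∈ S.r a)
    (hi : S.relOf (w, y) ∈ T) : S.relOf (w', y) ∈ T := by
  have hswap : (w', x) ∈ S.r (S.star a) := (S.mem_star a (w', x)).2 hw'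
  have h1 : 0 < S.pNum (S.star a) a (S.relOf (w', w)) :=
    S.pNum_pos hswap hw (S.mem_relOf (w', w))
  have h2 : 0 < S.pNum (S.relOf (w', w)) (S.relOf (w, y)) (S.relOf (w', y)) :=
    S.pNum_pos (S.mem_relOf (w', w)) (S.mem_relOf (w, y)) (S.mem_relOf (w', y))
  exact S.singular_step1 hT a hi h1 h2

end AssocScheme

/-- Let `T` be a singular subset of `S` and `v_T = Σ_{R_i ∈ T} A̅_i`. If `p ∣ k_i` for every
`R_i ∈ S ∖ O_ϑ(S)`, then `⟨v_T⟩_𝔽` is a trivial `𝔽S`-submodule of the regular `𝔽S`-module. -/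
theorem isTrivialVector_sum_of_isSingular
    {X : Type*} [Fintype X] [Nonempty X] {d : ℕ} (S : AssocScheme X d)
    (𝔽 : Type*) [Field 𝔽] (p : ℕ) [Fact p.Prime] [CharP 𝔽 p]
    (T : Set (Fin (d + 1))) (hT : S.IsSingular T)
    (hp : ∀ i : Fin (d + 1), i ∉ S.thinRadical → p ∣ S.val i) :
    S.IsTrivialVector 𝔽 (∑ i ∈ Finset.univ.filter (· ∈ T), S.adj 𝔽 i) := by
  classical
  set v : Matrix X X 𝔽 := ∑ i ∈ Finset.univ.filter (· ∈ T), S.adj 𝔽 i with hv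
  have hzeroT : (0 : Fin (d + 1)) ∈ T := hT.1 S.zero_mem_thinRadical
  have hventry : ∀ w y : X, v w y = if S.relOf (w, y) ∈ T then (1 : 𝔽) else 0 := by
    intro w y
    rw [hv]
    rw [Matrix.sum_apply]
    by_cases hm : S.relOf (w, y) ∈ T
    · rw [if_pos hm]
      rw [Finset.sum_eq_single_of_mem (S.relOf (w, y)) (by simp [hm])]
      · simp [AssocScheme.adj, S.mem_relOf (w, y)]
      · intro b hb hne
        simp only [AssocScheme.adj, Matrix.of_apply]
        rw [if_neg]
        intro hmem
        exact hne (S.rel_eq hmem (S.mem_relOf (w, y)))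
    · rw [if_neg hm]
      apply Finset.sum_eq_zero
      intro b hb
      simp only [AssocScheme.adj, Matrix.of_apply]
      rw [if_neg]
      intro hmem
      exact hm (S.relOf_eq hmem ▸ (Finset.mem_filter.1 hb).2)
  refine ⟨?_, ?_, ?_⟩
  · obtain ⟨x⟩ := ‹Nonempty X›
    intro h0
    have h1 : v x x = 0 := by rw [h0]; rfl
    rw [hventry x x] at h1
    have hx : S.relOf ((x : X), x) = 0 := S.relOf_eq (by rw [S.r_zero]; rfl)
    rw [hx, if_pos hzeroT] at h1
    exact one_ne_zero h1
  · exact Submodule.sum_mem _ fun i _ => Submodule.subset_span ⟨i, rfl⟩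
  · intro a
    ext x y
    rw [Matrix.mul_apply, Matrix.smul_apply, smul_eq_mul, hventry x y]
    have hterm : ∀ w : X, S.adj 𝔽 a x w * v w y
        = if (x, w) ∈ S.r a ∧ S.relOf (w, y) ∈ T then (1 : 𝔽) else 0 := by
      intro w
      rw [hventry w y]
      simp only [AssocScheme.adj, Matrix.of_apply]
      by_cases h1 : (x, w) ∈ S.r a <;> by_cases h2 : S.relOf (w, y) ∈ T <;>
        simp [h1, h2]
    simp_rw [hterm]
    rw [Finset.sum_boole]
    by_cases hW : ∃ w0, (x, w0) ∈ S.r a ∧ S.relOf (w0, y) ∈ T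
    · obtain ⟨w0, hw0a, hw0T⟩ := hW
      have hfe : (Finset.univ.filter fun w => (x, w) ∈ S.r a ∧ S.relOf (w, y) ∈ T)
          = Finset.univ.filter fun w => (x, w) ∈ S.r a := by
        ext w
        simp only [Finset.mem_filter, Finset.mem_univ, true_and]
        exact ⟨fun h => h.1, fun h => ⟨h, S.transfer hT hw0a h hw0T⟩⟩
      rw [hfe, S.card_filter_r a x]
      by_cases hthin : a ∈ S.thinRadical
      · have hcT : S.relOf ((x : X), y) ∈ T := by
          apply S.singular_step2 hT hthin hw0T
          exact S.pNum_pos hw0a (S.mem_relOf (w0, y)) (S.mem_relOf (x, y))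
        rw [if_pos hcT, mul_one]
      · have hz : (S.val a : 𝔽) = 0 := (CharP.cast_eq_zero_iff 𝔽 p _).2 (hp a hthin)
        rw [hz, zero_mul]
    · push_neg at hW
      have hfe : (Finset.univ.filter fun w => (x, w) ∈ S.r a ∧ S.relOf (w, y) ∈ T) = ∅ := by
        ext w
        simp only [Finset.mem_filter, Finset.mem_univ, true_and, Finset.notMem_empty,
          iff_false, not_and]
        exact hW w
      rw [hfe, Finset.card_empty, Nat.cast_zero]
      by_cases hcT : S.relOf ((x : X), y) ∈ T
      · by_cases hthin : a ∈ S.thinRadical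
        · exfalso
          have hcard : (Finset.univ.filter fun z => (x, z) ∈ S.r a).card = 1 := by
            rw [S.card_filter_r a x]; exact hthin
          obtain ⟨w, hwmem⟩ := Finset.card_eq_one.1 hcard
          have hw : (x, w) ∈ S.r a := by
            have hmem : w ∈ Finset.univ.filter fun z => (x, z) ∈ S.r a := by
              rw [hwmem]; exact Finset.mem_singleton_self w
            exact (Finset.mem_filter.1 hmem).2
          apply hW w hw
          have hstar : S.star a ∈ S.thinRadical := by
            show S.val (S.star a) = 1
            rw [S.val_star]
            exact hthin
          apply S.singular_step2 hT hstar hcT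
          exact S.pNum_pos ((S.mem_star a (w, x)).2 hw) (S.mem_relOf (x, y))
            (S.mem_relOf (w, y))
        · rw [if_pos hcT, mul_one, (CharP.cast_eq_zero_iff 𝔽 p _).2 (hp a hthin)]
      · rw [if_neg hcT, mul_zero]
end

section
/- Assume p = 2 and S is a quasi-thin association scheme (k_i ≤ 2 for all i). Let ⟨v⟩_𝔽 be a trivial 𝔽S-submodule of the regular 𝔽S-module. If R_0 ∈ U(v), then U(v) is a singular subset of S. -/
open scoped Classical

section Aux

variable {X : Type*} [Fintype X] [Nonempty X] {d : ℕ}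

namespace AssocScheme

lemma rel_unique (S : AssocScheme X d) {q : X × X} {i j : Fin (d + 1)}
    (hi : q ∈ S.r i) (hj : q ∈ S.r j) : i = j := by
  obtain ⟨k, _, hk⟩ := S.existsUnique_rel q
  rw [hk i hi, hk j hj]

lemma exists_mid (S : AssocScheme X d) {i j k : Fin (d + 1)} (h : 0 < S.pNum i j k)
    {u w : X} (huw : (u, w) ∈ S.r k) :
    ∃ z : X, (u, z) ∈ S.r i ∧ (z, w) ∈ S.r j := by
  have h2 : ({z : X | (u, z) ∈ S.r i ∧ (z, w) ∈ S.r j}).ncard = S.pNum i j k :=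
    S.ncard_eq i j k (u, w) huw
  have h3 : ({z : X | (u, z) ∈ S.r i ∧ (z, w) ∈ S.r j}).Nonempty := by
    apply Set.nonempty_of_ncard_ne_zero
    rw [h2]
    omega
  obtain ⟨z, hz⟩ := h3
  exact ⟨z, hz⟩

lemma mem_r_zero (S : AssocScheme X d) (u : X) : (u, u) ∈ S.r 0 := by
  rw [S.r_zero]; rfl

lemma outdeg (S : AssocScheme X d) (i : Fin (d + 1)) (u : X) :
    (Finset.univ.filter fun z => (u, z) ∈ S.r i).card = S.val i := by
  have h := S.ncard_eq i (S.star i) 0 (u, u) (S.mem_r_zero u)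
  have hset : {z : X | (u, z) ∈ S.r i ∧ (z, u) ∈ S.r (S.star i)}
      = {z : X | (u, z) ∈ S.r i} := by
    ext z
    simp only [Set.mem_setOf_eq, and_iff_left_iff_imp]
    intro hz
    exact (S.mem_star i (z, u)).mpr hz
  rw [hset] at h
  rw [show S.val i = S.pNum i (S.star i) 0 from rfl, ← h]
  rw [Set.ncard_eq_toFinset_card']
  congr 1
  ext z
  simp

end AssocScheme

end Aux

/-- Assume `p = 2` and `S` is quasi-thin. If `⟨v⟩_𝔽` is a trivial `𝔽S`-submodule of the
regular `𝔽S`-module with `R_0 ∈ U(v)`, then `U(v)` is a singular subset of `S`. -/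
theorem isSingular_support_of_trivial
    {X : Type*} [Fintype X] [Nonempty X] {d : ℕ} (S : AssocScheme X d)
    (𝔽 : Type*) [Field 𝔽] [CharP 𝔽 2]
    (hqt : ∀ i : Fin (d + 1), S.val i ≤ 2)
    (c : Fin (d + 1) → 𝔽) (v : Matrix X X 𝔽)
    (hv : v = ∑ i : Fin (d + 1), c i • S.adj 𝔽 i)
    (htriv : S.IsTrivialVector 𝔽 v)
    (h0 : c 0 ≠ 0) :
    S.IsSingular {j | c j ≠ 0} := by
  -- entry of v at a pair in relation k is c k
  have vEntry : ∀ (u w : X) (k : Fin (d + 1)), (u, w) ∈ S.r k → v u w = c k := by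
    intro u w k hk
    rw [hv]
    rw [show (∑ i : Fin (d + 1), c i • S.adj 𝔽 i) u w
        = ∑ i : Fin (d + 1), c i * (if (u, w) ∈ S.r i then 1 else 0) by
      simp [Matrix.sum_apply, AssocScheme.adj]]
    rw [Finset.sum_eq_single k]
    · simp [hk]
    · intro i _ hik
      have : (u, w) ∉ S.r i := fun h => hik (S.rel_unique h hk)
      simp [this]
    · simp
  -- the eigen-equation, pointwise
  have eqn : ∀ (i : Fin (d + 1)) (u w : X),
      ∑ z ∈ Finset.univ.filter (fun z => (u, z) ∈ S.r i), v z w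
        = (S.val i : 𝔽) * v u w := by
    intro i u w
    have h := htriv.2.2 i
    have h2 := congrFun (congrFun h u) w
    rw [Matrix.mul_apply] at h2
    have hL : ∑ z : X, S.adj 𝔽 i u z * v z w
        = ∑ z ∈ Finset.univ.filter (fun z => (u, z) ∈ S.r i), v z w := by
      rw [Finset.sum_filter]
      apply Finset.sum_congr rfl
      intro z _
      by_cases hz : (u, z) ∈ S.r i <;> simp [AssocScheme.adj, hz]
    rw [hL] at h2
    simpa using h2
  -- thin relations: the unique out-neighbor determines the value
  have thinStep : ∀ (x : Fin (d + 1)), S.val x = 1 → ∀ (u q w : X),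
      (u, q) ∈ S.r x → v u w = v q w := by
    intro x hx u q w hq
    have hcard : (Finset.univ.filter fun z => (u, z) ∈ S.r x).card = 1 := by
      rw [S.outdeg x u, hx]
    have hmem : q ∈ Finset.univ.filter fun z => (u, z) ∈ S.r x := by
      simp [hq]
    have hsing : (Finset.univ.filter fun z => (u, z) ∈ S.r x) = {q} :=
      Finset.eq_singleton_iff_unique_mem.mpr ⟨hmem, fun y hy => by
        have := Finset.card_le_one.mp (le_of_eq hcard) y hy q hmem
        exact this⟩
    have h := eqn x u w
    rw [hsing, hx] at h
    simpa using h.symm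
  constructor
  · -- thin radical is contained in the support
    intro x hx
    have hx1 : S.val x = 1 := hx
    obtain ⟨⟨u, w⟩, huw⟩ := S.r_nonempty x
    have h1 : v u w = v w w := thinStep x hx1 u w w huw
    have h2 : v u w = c x := vEntry u w x huw
    have h3 : v w w = c 0 := vEntry w w 0 (S.mem_r_zero w)
    show c x ≠ 0
    rw [← h2, h1, h3]
    exact h0
  · -- the complex-product condition
    intro x hx y z hz k hk
    have hx1 : S.val x = 1 := hx
    obtain ⟨a, ⟨b, ⟨x1, hx1m, ⟨y1, hy1m, hb⟩⟩, ⟨y2, hy2m, ha⟩⟩, ⟨z1, hz1m, hpk⟩⟩ := hk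
    rw [Set.mem_singleton_iff] at hx1m hy1m hy2m hz1m
    rw [hx1m, hy1m] at hb
    rw [hy2m] at ha
    rw [hz1m] at hpk
    -- unfold a witness chain
    obtain ⟨⟨u, w⟩, huw⟩ := S.r_nonempty k
    obtain ⟨t, hut, htw⟩ := S.exists_mid hpk huw
    obtain ⟨s, hus, hst⟩ := S.exists_mid ha hut
    obtain ⟨q, huq, hqs⟩ := S.exists_mid hb hus
    have hsq : (s, q) ∈ S.r y := (S.mem_star y (q, s)).mp hqs
    have hvk : v u w = c k := vEntry u w k huw
    have hvq : v u w = v q w := thinStep x hx1 u q w huq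
    have htz : v t w = c z := vEntry t w z htw
    show c k ≠ 0
    rw [← hvk, hvq]
    by_cases hqteq : q = t
    · rw [hqteq, htz]; exact hz
    · -- q ≠ t : the out-neighborhood of s in R_y is exactly {q, t}
      have hqmem : q ∈ Finset.univ.filter fun m => (s, m) ∈ S.r y := by simp [hsq]
      have htmem : t ∈ Finset.univ.filter fun m => (s, m) ∈ S.r y := by simp [hst]
      have hsub : ({q, t} : Finset X) ⊆ Finset.univ.filter fun m => (s, m) ∈ S.r y := by
        intro m hm
        rcases Finset.mem_insert.mp hm with h | h
        · rw [h]; exact hqmem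
        · rw [Finset.mem_singleton.mp h]; exact htmem
      have hcard2 : ({q, t} : Finset X).card = 2 := Finset.card_pair hqteq
      have hle : 2 ≤ S.val y := by
        rw [← S.outdeg y s]
        calc 2 = ({q, t} : Finset X).card := hcard2.symm
          _ ≤ _ := Finset.card_le_card hsub
      have hval2 : S.val y = 2 := le_antisymm (hqt y) hle
      have hFeq : (Finset.univ.filter fun m => (s, m) ∈ S.r y) = ({q, t} : Finset X) := by
        symm
        apply Finset.eq_of_subset_of_card_le hsub
        rw [S.outdeg y s, hval2, hcard2]
      have hsum := eqn y s w
      rw [hFeq, Finset.sum_pair hqteq, hval2] at hsum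
      have h2zero : ((2 : ℕ) : 𝔽) = 0 := CharP.cast_eq_zero 𝔽 2
      rw [h2zero, zero_mul] at hsum
      have hneg : v q w = - v t w := eq_neg_of_add_eq_zero_left hsum
      rw [hneg, htz]
      simpa using hz
end
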